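/- Let H be a Hilbert space written as an orthogonal direct sum H = ⊕_{j∈J} H_j of closed subspaces, and for each j let {ψ_{j,γ}}_{γ∈Γ} ⊆ H_j be a Parseval frame for H_j, over a common countable index set Γ. Assume that for all j ≠ j' and all φ ∈ H, Σ_γ ⟨φ, ψ_{j,γ}⟩ · conj(⟨φ, ψ_{j',γ}⟩) = 0 (orthogonality of the ranges of the coefficient operators). Then {Σ_j ψ_{j,γ}}_{γ∈Γ} is a Parseval frame for H, provided Σ_j ψ_{j,γ} converges in H for each γ. -/

import Mathlib

/-!
Decompose `φ = ∑ⱼ xⱼ` with `xⱼ ∈ Hⱼ`. Since `ψ j γ ∈ Hⱼ`, the coefficient sequence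
`cⱼ = (⟪φ, ψ j γ⟫)_γ` is that of `xⱼ`, so Parseval on `Hⱼ` puts it in `ℓ²(Γ)` with `‖cⱼ‖ = ‖xⱼ‖`.
The hypothesis on the coefficient operators says the `cⱼ` are pairwise orthogonal in `ℓ²(Γ)`, so
`∑ⱼ cⱼ` converges there with squared norm `∑ⱼ ‖xⱼ‖² = ‖φ‖²`, and its `γ`-th coordinate is
`∑ⱼ ⟪φ, ψ j γ⟫ = ⟪φ, Ψ γ⟫`.
-/

open scoped InnerProductSpace ComplexConjugate

section OrthogonalSeries

variable {𝕜 E ι : Type*} [RCLike 𝕜] [NormedAddCommGroup E] [InnerProductSpace 𝕜 E]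

theorem HasSum.inner_eq_inner_of_forall_ne {x : ι → E} {s v : E} (hx : HasSum x s) (i : ι)
    (hv : ∀ j ≠ i, ⟪v, x j⟫_𝕜 = 0) : ⟪v, s⟫_𝕜 = ⟪v, x i⟫_𝕜 :=
  (hx.mapL (innerSL 𝕜 v)).unique (hasSum_single i hv)

theorem HasSum.hasSum_norm_sq_of_pairwise_inner_eq_zero {f : ι → E} {s : E}
    (hs : HasSum f s) (hf : Pairwise fun i j => ⟪f i, f j⟫_𝕜 = 0) :
    HasSum (fun i => ‖f i‖ ^ 2) (‖s‖ ^ 2) := by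
  have hterm : ∀ i, RCLike.re ⟪s, f i⟫_𝕜 = ‖f i‖ ^ 2 := fun i => by
    rw [inner_re_symm, hs.inner_eq_inner_of_forall_ne i fun j hj => hf hj.symm,
      inner_self_eq_norm_sq]
  simpa only [innerSL_apply_apply, hterm, inner_self_eq_norm_sq] using
    RCLike.hasSum_re 𝕜 (hs.mapL (innerSL 𝕜 s))

theorem summable_of_pairwise_inner_eq_zero [CompleteSpace E] {f : ι → E}
    (hf : Pairwise fun i j => ⟪f i, f j⟫_𝕜 = 0) (hsq : Summable fun i => ‖f i‖ ^ 2) :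
    Summable f := by
  have hspan : OrthogonalFamily 𝕜 (fun i => 𝕜 ∙ f i) fun i => (𝕜 ∙ f i).subtypeₗᵢ :=
    OrthogonalFamily.of_pairwise fun i j hij => by
      simpa [Function.onFun, Submodule.isOrtho_span] using hf hij
  exact (hspan.summable_iff_norm_sq_summable
    fun i => ⟨f i, Submodule.mem_span_singleton_self _⟩).2 hsq

theorem OrthogonalFamily.exists_hasSum_mem [CompleteSpace E] {K : ι → Submodule 𝕜 E}
    [∀ i, CompleteSpace (K i)] (hK : OrthogonalFamily 𝕜 (fun i => K i) fun i => (K i).subtypeₗᵢ)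
    (hdense : ⊤ ≤ (⨆ i, K i).topologicalClosure) (φ : E) :
    ∃ x : ι → E, (∀ i, x i ∈ K i) ∧ HasSum x φ := by
  have hK' := IsHilbertSum.mkInternal K hK hdense
  refine ⟨fun i => hK'.linearIsometryEquiv φ i, fun i => (hK'.linearIsometryEquiv φ i).2, ?_⟩
  simpa using hK'.hasSum_linearIsometryEquiv_symm (hK'.linearIsometryEquiv φ)

theorem hasSum_norm_inner_sq_of_norm_sq_eq_tsum {Γ : Type*} {v : E} {e : Γ → E}
    (h : ‖v‖ ^ 2 = ∑' γ, ‖⟪v, e γ⟫_𝕜‖ ^ 2) : HasSum (fun γ => ‖⟪v, e γ⟫_𝕜‖ ^ 2) (‖v‖ ^ 2) := by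
  by_cases hsum : Summable fun γ => ‖⟪v, e γ⟫_𝕜‖ ^ 2
  · exact h ▸ hsum.hasSum
  · -- a divergent sum has junk value `0`, which forces `v = 0`, making the sum trivially summable
    have hv : v = 0 := by simpa [tsum_eq_zero_of_not_summable hsum] using h
    exact absurd (by simp [hv]) hsum

end OrthogonalSeries

section SquareSummable

variable {𝕜 ι Γ : Type*} [RCLike 𝕜]

theorem lp.hasSum_norm_sq {G : Γ → Type*} [∀ γ, NormedAddCommGroup (G γ)] (f : lp G 2) :
    HasSum (fun γ => ‖f γ‖ ^ 2) (‖f‖ ^ 2) := by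
  simpa using lp.hasSum_norm (p := 2) (by norm_num) f

theorem memℓp_two_of_summable_norm_sq {G : Γ → Type*} [∀ γ, NormedAddCommGroup (G γ)]
    {a : ∀ γ, G γ} (ha : Summable fun γ => ‖a γ‖ ^ 2) :
    Memℓp a 2 :=
  memℓp_gen (by simpa using ha)

theorem hasSum_norm_sq_of_pairwise_orthogonal_seq {a : ι → Γ → 𝕜} {r : ι → ℝ} {R : ℝ}
    {b : Γ → 𝕜} (ha : ∀ i, HasSum (fun γ => ‖a i γ‖ ^ 2) (r i))
    (horth : ∀ i j, i ≠ j → ∑' γ, a i γ * conj (a j γ) = 0) (hr : HasSum r R)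
    (hb : ∀ γ, HasSum (fun i => a i γ) (b γ)) :
    HasSum (fun γ => ‖b γ‖ ^ 2) R := by
  let A : ι → lp (fun _ : Γ => 𝕜) 2 :=
    fun i => ⟨a i, memℓp_two_of_summable_norm_sq (ha i).summable⟩
  have hnorm : ∀ i, ‖A i‖ ^ 2 = r i := fun i => (lp.hasSum_norm_sq (A i)).unique (ha i)
  have hA : Pairwise fun i j => ⟪A i, A j⟫_𝕜 = 0 := fun i j hij => by
    change ⟪A i, A j⟫_𝕜 = 0
    rw [lp.inner_eq_tsum, ← horth j i hij.symm]
    exact tsum_congr fun γ => by simp [A]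
  obtain ⟨L, hL⟩ := summable_of_pairwise_inner_eq_zero hA (by simpa only [hnorm] using hr.summable)
  have hLb : ⇑L = b := funext fun γ => (hL.mapL (lp.evalCLM 𝕜 _ 2 γ)).unique (hb γ)
  have hLR : ‖L‖ ^ 2 = R :=
    (hL.hasSum_norm_sq_of_pairwise_inner_eq_zero hA).unique (by simpa only [hnorm])
  simpa only [hLb, hLR] using lp.hasSum_norm_sq L

end SquareSummable

theorem direct_sum_parseval_frame_general
    {H : Type*} [NormedAddCommGroup H] [InnerProductSpace ℂ H] [CompleteSpace H]
    {J : Type*} {Γ : Type*}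
    (Hsub : J → Submodule ℂ H) (hclosed : ∀ j, IsClosed ((Hsub j : Set H)))
    (horthsub : ∀ j j' : J, j ≠ j' → Hsub j' ≤ (Hsub j)ᗮ)
    (hdense : (⨆ j : J, Hsub j).topologicalClosure = ⊤)
    (ψ : J → Γ → H) (hmem : ∀ j γ, ψ j γ ∈ Hsub j)
    (hP : ∀ j : J, ∀ φ ∈ Hsub j, ‖φ‖ ^ 2 = ∑' γ : Γ, ‖⟪φ, ψ j γ⟫_ℂ‖ ^ 2)
    (horth : ∀ j j' : J, j ≠ j' → ∀ φ : H,
      ∑' γ : Γ, ⟪φ, ψ j γ⟫_ℂ * (starRingEnd ℂ) ⟪φ, ψ j' γ⟫_ℂ = 0)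
    (Ψ : Γ → H) (hΨ : ∀ γ : Γ, HasSum (fun j : J => ψ j γ) (Ψ γ)) :
    ∀ φ : H, ‖φ‖ ^ 2 = ∑' γ : Γ, ‖⟪φ, Ψ γ⟫_ℂ‖ ^ 2 := by
  intro φ
  have : ∀ j, CompleteSpace (Hsub j) := fun j => (hclosed j).completeSpace_coe
  have hK : OrthogonalFamily ℂ (fun j => Hsub j) fun j => (Hsub j).subtypeₗᵢ :=
    .of_pairwise fun i j hij => Submodule.isOrtho_iff_le.2 (horthsub j i hij.symm)
  obtain ⟨x, hxK, hx⟩ := hK.exists_hasSum_mem hdense.ge φ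
  have hcoef : ∀ j γ, ⟪φ, ψ j γ⟫_ℂ = ⟪x j, ψ j γ⟫_ℂ := fun j γ => by
    rw [← inner_conj_symm, hx.inner_eq_inner_of_forall_ne j fun i hij =>
      Submodule.inner_right_of_mem_orthogonal (hmem j γ) (horthsub j i hij.symm (hxK i)),
      inner_conj_symm]
  have hxnorm : HasSum (fun j => ‖x j‖ ^ 2) (‖φ‖ ^ 2) :=
    hx.hasSum_norm_sq_of_pairwise_inner_eq_zero fun i j hij =>
      Submodule.inner_right_of_mem_orthogonal (hxK i) (horthsub i j hij (hxK j))
  have hcoefnorm : ∀ j, HasSum (fun γ => ‖⟪φ, ψ j γ⟫_ℂ‖ ^ 2) (‖x j‖ ^ 2) := fun j => by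
    simpa only [hcoef] using hasSum_norm_inner_sq_of_norm_sq_eq_tsum (hP j (x j) (hxK j))
  exact (hasSum_norm_sq_of_pairwise_orthogonal_seq hcoefnorm (fun i j hij => horth i j hij φ)
    hxnorm fun γ => (hΨ γ).mapL (innerSL ℂ φ)).tsum_eq.symm

/-- If H is the orthogonal direct sum of closed subspaces H_j, each carrying a
Parseval frame {ψ_{j,γ}}_{γ∈Γ}, and the ranges of the coefficient operators are
pairwise orthogonal, then {Σ_j ψ_{j,γ}}_{γ∈Γ} is a Parseval frame for H. -/
theorem direct_sum_parseval_frame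
    {H : Type*} [NormedAddCommGroup H] [InnerProductSpace ℂ H] [CompleteSpace H]
    {J : Type*} [Countable J] {Γ : Type*} [Countable Γ]
    (Hsub : J → Submodule ℂ H) (hclosed : ∀ j, IsClosed ((Hsub j : Set H)))
    (horthsub : ∀ j j' : J, j ≠ j' → Hsub j' ≤ (Hsub j)ᗮ)
    (hdense : (⨆ j : J, Hsub j).topologicalClosure = ⊤)
    (ψ : J → Γ → H) (hmem : ∀ j γ, ψ j γ ∈ Hsub j)
    (hP : ∀ j : J, ∀ φ ∈ Hsub j, ‖φ‖ ^ 2 = ∑' γ : Γ, ‖⟪φ, ψ j γ⟫_ℂ‖ ^ 2)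
    (horth : ∀ j j' : J, j ≠ j' → ∀ φ : H,
      ∑' γ : Γ, ⟪φ, ψ j γ⟫_ℂ * (starRingEnd ℂ) ⟪φ, ψ j' γ⟫_ℂ = 0)
    (Ψ : Γ → H) (hΨ : ∀ γ : Γ, HasSum (fun j : J => ψ j γ) (Ψ γ)) :
    ∀ φ : H, ‖φ‖ ^ 2 = ∑' γ : Γ, ‖⟪φ, Ψ γ⟫_ℂ‖ ^ 2 :=
  direct_sum_parseval_frame_general Hsub hclosed horthsub hdense ψ hmem hP horth Ψ hΨ
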